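/- Let X be a compact Hausdorff abelian topological group, let A be a continuous group automorphism of X that is quasi-unipotent of type (m,l) (A^m = I + N with N^l = 0), let b ∈ X be an element of finite order, and let T x = A x + b. Let φ : X → ℂ be a continuous character of X and x ∈ X. Then for every p with 1 ≤ p ≤ m there exist a real polynomial P₁ of degree at most l−1 and a polynomial P₂ with rational coefficients such that φ(T^n x) = e^{2πi (P₁(q)+P₂(q))} for every n ≥ l of the form n = qm + p with q ∈ ℕ. -/

import Mathlib

/-!
Put `y = T^[p] x`, so that `T^[q * m + p] x = S^[q] y` for `S = T^[m]`. Since `A^m = 1 + N`, the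
map `S` is again affine, `S y = (1 + N) y + c`, and `k • c = 0` whenever `k • b = 0`. Iterating
and expanding `(1 + N)^q` binomially (`N^l = 0` cuts the sums at `l`) gives
`S^[q] y = ∑_{j<l} C(q, j) N^j y + ∑_{j<l} C(q, j+1) N^j c`.
With `e(t) = exp (2πit)`, write `φ (N^j y) = e(θ_j)` with `θ_j` real and `φ (N^j c) = e(r_j)` with
`r_j` rational, as `φ (N^j c)` is a `k`-th root of unity. Then
`φ (S^[q] y) = e(∑ C(q, j) θ_j + ∑ C(q, j+1) r_j)`, and `q ↦ C(q, j) = q (q-1) ⋯ (q-j+1) / j!`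
is a polynomial of degree `j` with rational coefficients.
-/

open Finset Polynomial Complex
open scoped Real

lemma AddAut.nsmul_apply {M : Type*} [Add M] (e : AddAut M) (n : ℕ) (x : M) :
    (n • e) x = e^[n] x := by
  induction n with
  | zero => rfl
  | succ n ih => rw [succ_nsmul', AddAut.add_apply, ih, Function.iterate_succ_apply']

lemma Nat.sum_range_choose_eq_choose_succ (q t : ℕ) :
    ∑ j ∈ range q, j.choose t = q.choose (t + 1) := by
  induction q with
  | zero => simp
  | succ q ih => rw [sum_range_succ, ih, Nat.choose_succ_succ, Nat.add_comm]

section Unipotent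

variable {R : Type*} [Semiring R] {N : R} {l : ℕ}

lemma one_add_pow_eq_sum_range_choose (hN : N ^ l = 0) (q : ℕ) :
    (1 + N) ^ q = ∑ j ∈ range l, q.choose j • N ^ j := by
  rw [add_comm, (Commute.one_right N).add_pow]
  simp only [one_pow, mul_one, ← nsmul_eq_mul']
  -- both sums agree with the one over `range (q + 1 + l)`
  have hchoose : ∀ j ≥ q + 1, q.choose j • N ^ j = 0 := fun j hj => by
    rw [Nat.choose_eq_zero_of_lt hj, zero_smul]
  have hpow : ∀ j ≥ l, q.choose j • N ^ j = 0 := fun j hj => by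
    rw [pow_eq_zero_of_le hj hN, smul_zero]
  rw [← eventually_constant_sum hchoose (Nat.le_add_right (q + 1) l),
    eventually_constant_sum hpow (Nat.le_add_left l (q + 1))]

lemma sum_range_one_add_pow_eq_sum_range_choose_succ (hN : N ^ l = 0) (q : ℕ) :
    ∑ i ∈ range q, (1 + N) ^ i = ∑ j ∈ range l, q.choose (j + 1) • N ^ j := by
  simp only [one_add_pow_eq_sum_range_choose hN]
  rw [sum_comm]
  simp only [← sum_smul, Nat.sum_range_choose_eq_choose_succ]

end Unipotent

section Affine

variable {X : Type*} [AddCommMonoid X]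

lemma AddMonoid.End.iterate_affine_apply (f : AddMonoid.End X) (c y : X) (n : ℕ) :
    (fun y => f y + c)^[n] y = (f ^ n) y + (∑ i ∈ range n, f ^ i) c := by
  induction n with
  | zero => simp
  | succ n ih =>
    rw [Function.iterate_succ_apply', ih, pow_succ', geom_sum_succ, map_add, add_assoc]
    rfl

lemma AddMonoid.End.iterate_unipotent_affine_apply {N : AddMonoid.End X} {l : ℕ} (hN : N ^ l = 0)
    (c y : X) (q : ℕ) :
    (fun y => (1 + N) y + c)^[q] y =
      ∑ j ∈ range l, q.choose j • (N ^ j) y + ∑ j ∈ range l, q.choose (j + 1) • (N ^ j) c := by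
  rw [iterate_affine_apply, one_add_pow_eq_sum_range_choose hN,
    sum_range_one_add_pow_eq_sum_range_choose_succ hN]
  congr 1 <;> exact AddMonoidHom.finsetSum_apply _ _ _

end Affine

lemma exists_polynomial_eval_eq_sum_choose_add_mul {K : Type*} [Field K] [CharZero K]
    (l s : ℕ) (c : ℕ → K) :
    ∃ P : K[X], P.natDegree ≤ l - 1 + s ∧
      ∀ q : ℕ, P.eval (q : K) = ∑ j ∈ range l, (q.choose (j + s) : K) * c j := by
  refine ⟨∑ j ∈ range l, C (c j / (j + s).factorial) * descPochhammer K (j + s), ?_, fun q => ?_⟩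
  · refine natDegree_sum_le_of_forall_le _ _ fun j hj => (natDegree_C_mul_le _ _).trans ?_
    rw [descPochhammer_natDegree]
    have := mem_range.1 hj
    omega
  · simp only [eval_finsetSum, eval_mul, eval_C, Nat.cast_choose_eq_descPochhammer_div]
    exact sum_congr rfl fun j _ => by ring

namespace Complex

lemma exists_eq_exp_two_pi_mul_I_of_norm_eq_one {z : ℂ} (hz : ‖z‖ = 1) :
    ∃ θ : ℝ, z = exp (2 * π * I * θ) := by
  obtain ⟨θ, rfl⟩ := (norm_eq_one_iff z).1 hz
  refine ⟨θ / (2 * π), ?_⟩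
  congr 1
  push_cast
  field_simp

lemma exists_rat_eq_exp_two_pi_mul_I_of_pow_eq_one {z : ℂ} {k : ℕ} (hk : k ≠ 0)
    (hz : z ^ k = 1) : ∃ r : ℚ, z = exp (2 * π * I * (r : ℝ)) := by
  have := NeZero.mk hk
  obtain ⟨i, -, rfl⟩ := (isPrimitiveRoot_exp k hk).eq_pow_of_pow_eq_one hz
  refine ⟨i / k, ?_⟩
  rw [← exp_nat_mul]
  congr 1
  push_cast
  ring

end Complex

lemma AddChar.map_sum_nsmul_eq_exp {A ι : Type*} [AddCommMonoid A] (ψ : AddChar A ℂ)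
    (s : Finset ι) (c : ι → ℕ) (v : ι → A) (θ : ι → ℝ)
    (hθ : ∀ i ∈ s, ψ (v i) = exp (2 * π * I * θ i)) :
    ψ (∑ i ∈ s, c i • v i) = exp (2 * π * I * ↑(∑ i ∈ s, (c i : ℝ) * θ i)) := by
  classical
  induction s using Finset.induction_on with
  | empty => simp
  | insert i s hi ih =>
    rw [sum_insert hi, sum_insert hi, map_add_eq_mul, map_nsmul_eq_pow, hθ i (mem_insert_self i s),
      ih fun j hj => hθ j (mem_insert_of_mem hj), ← exp_nat_mul, ← exp_add]
    push_cast
    ring_nf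

theorem character_orbit_polynomial_quasiUnipotent_finiteOrder_general
    {X : Type*} [AddCommGroup X]
    (m l : ℕ)
    (A : AddAut X)
    (N : AddMonoid.End X)
    (hA : ∀ x : X, (m • A) x = x + N x) (hN : N ^ l = 0)
    (b : X) (hb : ∃ k : ℕ, 1 ≤ k ∧ k • b = 0)
    (T : X → X) (hT : ∀ x : X, T x = A x + b)
    (φ : X → ℂ)
    (hφmul : ∀ x y : X, φ (x + y) = φ x * φ y)
    (hφabs : ∀ x : X, ‖φ x‖ = 1)
    (x : X) :
    ∀ p : ℕ, 1 ≤ p → p ≤ m →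
      ∃ (P₁ : Polynomial ℝ) (P₂ : Polynomial ℚ), P₁.natDegree ≤ l - 1 ∧
        ∀ n q : ℕ, n = q * m + p → l ≤ n →
          φ (T^[n] x) = Complex.exp (2 * Real.pi * Complex.I *
            (P₁.eval (q : ℝ) + (↑(P₂.eval ((q : ℕ) : ℚ)) : ℝ))) := by
  intro p _ _
  obtain ⟨k, hk, hkb⟩ := hb
  have hφ0 : φ 0 = 1 := by
    have h0 : φ 0 ≠ 0 := norm_ne_zero_iff.1 (by rw [hφabs]; exact one_ne_zero)
    simpa [h0] using (hφmul 0 0).symm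
  let ψ : AddChar X ℂ := ⟨φ, hφ0, hφmul⟩
  let a : AddMonoid.End X := A.toAddMonoidHom
  set c := (∑ i ∈ range m, a ^ i) b
  have hTm : T^[m] = fun y => (1 + N) y + c := by
    funext y
    rw [show T = fun y => a y + b from funext hT, a.iterate_affine_apply, AddMonoid.End.coe_pow]
    exact congr_arg (· + c) ((A.nsmul_apply m y).symm.trans (hA y))
  have hc : ∀ j, ψ ((N ^ j) c) ^ k = 1 := fun j => by
    rw [← ψ.map_nsmul_eq_pow, ← map_nsmul, ← map_nsmul, hkb, map_zero, map_zero, ψ.map_zero_eq_one]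
  choose θ hθ using fun j =>
    exists_eq_exp_two_pi_mul_I_of_norm_eq_one (hφabs ((N ^ j) (T^[p] x)))
  choose r hr using fun j => exists_rat_eq_exp_two_pi_mul_I_of_pow_eq_one (by omega) (hc j)
  obtain ⟨P₁, hdeg, hP₁⟩ := exists_polynomial_eval_eq_sum_choose_add_mul l 0 θ
  obtain ⟨P₂, -, hP₂⟩ := exists_polynomial_eval_eq_sum_choose_add_mul l 1 r
  refine ⟨P₁, P₂, hdeg, fun n q hn _ => ?_⟩
  have horbit : T^[n] x = ∑ j ∈ range l, q.choose j • (N ^ j) (T^[p] x) +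
      ∑ j ∈ range l, q.choose (j + 1) • (N ^ j) c := by
    rw [hn, Function.iterate_add_apply, mul_comm, Function.iterate_mul, hTm,
      AddMonoid.End.iterate_unipotent_affine_apply hN]
  change ψ (T^[n] x) = _
  rw [horbit, ψ.map_add_eq_mul, ψ.map_sum_nsmul_eq_exp _ _ _ θ fun j _ => hθ j,
    ψ.map_sum_nsmul_eq_exp _ _ _ (fun j => (r j : ℝ)) fun j _ => hr j, ← exp_add, hP₁, hP₂]
  push_cast
  ring_nf

theorem character_orbit_polynomial_quasiUnipotent_finiteOrder
    {X : Type*} [AddCommGroup X] [TopologicalSpace X] [IsTopologicalAddGroup X]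
    [CompactSpace X] [T2Space X]
    (m l : ℕ) (hm : 1 ≤ m) (hl : 1 ≤ l)
    (A : AddAut X) (hAcont : Continuous A) (hAsymm : Continuous A.symm)
    (N : AddMonoid.End X)
    (hA : ∀ x : X, (m • A) x = x + N x) (hN : N ^ l = 0)
    (b : X) (hb : ∃ k : ℕ, 1 ≤ k ∧ k • b = 0)
    (T : X → X) (hT : ∀ x : X, T x = A x + b)
    (φ : X → ℂ) (hφcont : Continuous φ)
    (hφmul : ∀ x y : X, φ (x + y) = φ x * φ y)
    (hφabs : ∀ x : X, ‖φ x‖ = 1)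
    (x : X) :
    ∀ p : ℕ, 1 ≤ p → p ≤ m →
      ∃ (P₁ : Polynomial ℝ) (P₂ : Polynomial ℚ), P₁.natDegree ≤ l - 1 ∧
        ∀ n q : ℕ, n = q * m + p → l ≤ n →
          φ (T^[n] x) = Complex.exp (2 * Real.pi * Complex.I *
            (P₁.eval (q : ℝ) + (↑(P₂.eval ((q : ℕ) : ℚ)) : ℝ))) :=
  character_orbit_polynomial_quasiUnipotent_finiteOrder_general m l A N hA hN b hb T hT φ hφmul
    hφabs x
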